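/- arXiv:1605.09052 — 8 statements merged into one kernel-verified Lean document; each statement's English description precedes it below -/
import Mathlib

section
/- Let n ≥ 2 and let B be the n×n real matrix with all off-diagonal entries equal to 1 and diagonal entries b_{ii} = 1 + k_i. For i ≠ j, the (i,j) cofactor (algebraic complement) of B equals -∏_{ℓ ∉ {i,j}} k_ℓ. -/
/-!
The cofactor is the adjugate entry `adj B j i`, the determinant of `B` with row `i` replaced by
`e_j`. Row `j` of `B` is `𝟙 + k_j e_j`, so subtracting `k_j` times the new row `i` turns it into `𝟙`,
and subtracting that from every other row `ℓ ∉ {i, j}` leaves `k_ℓ e_ℓ`. After swapping rows `i`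
and `j` (the sign `-1`) the matrix is diagonal, with entries `1` at `j` and `k_ℓ` at `ℓ ≠ i, j`,
except that row `i` is `𝟙`; its determinant is `∏_{ℓ ∉ {i, j}} k_ℓ`.
-/

open Matrix Finset

namespace Matrix

variable {n R : Type*} [Fintype n] [DecidableEq n] [CommRing R]

theorem det_one_updateRow (i : n) (r : n → R) : ((1 : Matrix n n R).updateRow i r).det = r i := by
  have hr : ∑ a, r a • (1 : Matrix n n R) a = r := by ext b; simp [one_apply]
  simpa [hr] using det_updateRow_sum (1 : Matrix n n R) i r

theorem diagonal_updateRow_eq_diagonal_mul (d : n → R) (i : n) (r : n → R) :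
    (diagonal d).updateRow i r
      = diagonal (Function.update d i 1) * (1 : Matrix n n R).updateRow i r := by
  ext a b
  rcases eq_or_ne a i with rfl | ha <;> simp [updateRow_apply, diagonal_apply, one_apply, *]

theorem det_diagonal_updateRow (d : n → R) (i : n) (r : n → R) :
    ((diagonal d).updateRow i r).det = r i * ∏ a ∈ univ.erase i, d a := by
  rw [diagonal_updateRow_eq_diagonal_mul, det_mul, det_diagonal, det_one_updateRow,
    prod_update_of_mem (mem_univ i), one_mul, mul_comm, sdiff_singleton_eq_erase]

theorem adjugate_ones_add_diagonal_apply_of_ne (k : n → R) {i j : n} (hij : i ≠ j) :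
    (of (fun _ _ => 1) + diagonal k).adjugate j i = -∏ ℓ ∈ univ \ {i, j}, k ℓ := by
  set A : Matrix n n R := of (fun _ _ => 1) + diagonal k
  set M := (A.updateRow i (Pi.single j 1)).updateRow j 1
  set N := (diagonal (Function.update k j 1)).updateRow i 1
  have hAj : A j = 1 + k j • Pi.single j 1 := by
    ext b; rcases eq_or_ne b j with rfl | hb <;> simp [A, *, Ne.symm]
  have hM : A.updateRow i (Pi.single j 1) = M.updateRow j (M j + k j • M i) := by
    simp only [M]
    rw [updateRow_self, updateRow_ne hij, updateRow_self, updateRow_idem, ← hAj,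
      ← updateRow_ne (M := A) (b := Pi.single j 1) hij.symm, updateRow_eq_self]
  have hMN : ∀ a b, M a b = N (Equiv.swap i j a) b
      + (if a = i ∨ a = j then 0 else 1) * N (Equiv.swap i j j) b := by
    intro a b
    rw [Equiv.swap_apply_right]
    by_cases hai : a = i
    · subst hai
      simp [M, N, updateRow_ne hij, updateRow_ne hij.symm, diagonal_apply, Pi.single_apply,
        eq_comm]
    by_cases haj : a = j
    · subst haj
      simp [M, N]
    · simp [M, N, A, hai, haj, Equiv.swap_apply_of_ne_of_ne, updateRow_ne, diagonal_apply,
        add_comm]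
  calc _ = M.det := by rw [adjugate_apply, hM, det_updateRow_add_smul_self M hij.symm]
    _ = (N.submatrix (Equiv.swap i j) id).det :=
      det_eq_of_forall_row_eq_smul_add_const _ j (by simp) hMN
    _ = -N.det := by rw [det_permute, Equiv.Perm.sign_swap hij]; simp
    _ = -∏ ℓ ∈ univ \ {i, j}, k ℓ := by
      rw [det_diagonal_updateRow, prod_update_of_mem (mem_erase.2 ⟨hij.symm, mem_univ j⟩),
        Pi.one_apply, one_mul, one_mul, ← sdiff_singleton_eq_erase, sdiff_sdiff_left,
        sup_eq_union, ← insert_eq]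

end Matrix

theorem cofactor_one_plus_diag_general (n : ℕ) (k : Fin (n + 1) → ℝ)
    (B : Matrix (Fin (n + 1)) (Fin (n + 1)) ℝ)
    (hB : ∀ i j, B i j = if i = j then 1 + k i else 1)
    (i j : Fin (n + 1)) (hij : i ≠ j) :
    (-1 : ℝ) ^ ((i : ℕ) + (j : ℕ)) *
      (B.submatrix i.succAbove j.succAbove).det
      = -∏ ℓ ∈ Finset.univ \ {i, j}, k ℓ := by
  have hB' : B = of (fun _ _ => 1) + diagonal k := by
    ext a b
    rw [hB]
    split_ifs with hab <;> simp [hab, add_comm]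
  rw [← adjugate_fin_succ_eq_det_submatrix, hB', adjugate_ones_add_diagonal_apply_of_ne k hij]

/-- The (i,j) cofactor of the matrix with off-diagonal entries 1 and
diagonal entries `1 + k i`, for `i ≠ j`, equals `-∏_{ℓ ∉ {i,j}} k ℓ`.
The submatrix deleting row `i` and column `j` is obtained via `Fin.succAbove`. -/
theorem cofactor_one_plus_diag (n : ℕ) (hn : 1 ≤ n) (k : Fin (n + 1) → ℝ)
    (B : Matrix (Fin (n + 1)) (Fin (n + 1)) ℝ)
    (hB : ∀ i j, B i j = if i = j then 1 + k i else 1)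
    (i j : Fin (n + 1)) (hij : i ≠ j) :
    (-1 : ℝ) ^ ((i : ℕ) + (j : ℕ)) *
      (B.submatrix i.succAbove j.succAbove).det
      = -∏ ℓ ∈ Finset.univ \ {i, j}, k ℓ :=
  cofactor_one_plus_diag_general n k B hB i j hij
end

section
/- Let B₁ be the n×n matrix (n ≥ 2) with off-diagonal entries 1 and diagonal entries 1 - 1/p_i, where p_i are nonzero reals. Let a = (a_1,...,a_n) be a real row vector and B₂ = aᵀa. Then for every real s, det(s·B₂ - B₁) = s·((∑_i a_i p_i)² - (∑_j p_j - 1)·∑_i a_i² p_i)/∏_ℓ p_ℓ + det(-B₁). In particular, det(s·B₂ - B₁) is an affine function of s. -/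
/-!
Write `B₁ = 𝟙𝟙ᵀ - diag(1/p)`. Then `s • B₂ - B₁ = diag(1/p) + s aaᵀ - 𝟙𝟙ᵀ` is a rank-two update
of an invertible diagonal matrix, and the matrix determinant lemma `det (D + U V) =
det D * det (1 + V D⁻¹ U)` reduces its determinant to a `2 × 2` determinant whose entries are
the weighted sums `∑ p`, `∑ a p`, `∑ a² p`. Since `s` enters `U` only through one column, that
determinant is affine in `s`.
-/

namespace Matrix

theorem vecMulVec_add_vecMulVec {ι α : Type*} [NonUnitalNonAssocSemiring α] (u v x y : ι → α) :
    vecMulVec u v + vecMulVec x y = (of ![u, x])ᵀ * of ![v, y] := by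
  ext i j
  simp [Matrix.mul_apply, Fin.sum_univ_two, vecMulVec_apply]

variable {ι K : Type*} [Fintype ι] [DecidableEq ι] [Field K]

theorem det_diagonal_add_vecMulVec_add_vecMulVec (d u v x y : ι → K) (hd : ∀ i, d i ≠ 0) :
    (diagonal d + vecMulVec u v + vecMulVec x y).det =
      (∏ i, d i) * ((1 + ∑ i, v i * u i / d i) * (1 + ∑ i, y i * x i / d i)
        - (∑ i, v i * x i / d i) * (∑ i, y i * u i / d i)) := by
  have hdet : IsUnit (diagonal d).det := by
    simpa [det_diagonal] using Finset.prod_ne_zero_iff.mpr fun i _ => hd i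
  have hinv : (diagonal d)⁻¹ = diagonal fun i => (d i)⁻¹ :=
    inv_eq_left_inv <| by
      rw [diagonal_mul_diagonal, ← diagonal_one]
      exact congrArg diagonal (funext fun i => inv_mul_cancel₀ (hd i))
  rw [add_assoc, vecMulVec_add_vecMulVec, det_add_mul _ _ hdet, det_diagonal, hinv, det_fin_two]
  simp [Matrix.mul_apply, vecMul, dotProduct, diagonal_apply, div_eq_mul_inv, mul_assoc,
    mul_comm (d _)⁻¹]

end Matrix

open Matrix in
theorem det_smul_sub_eq_div_prod {ι K : Type*} [Fintype ι] [DecidableEq ι] [Field K]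
    (p a : ι → K) (hp : ∀ i, p i ≠ 0) (B₁ B₂ : Matrix ι ι K)
    (hB₁ : ∀ i j, B₁ i j = if i = j then 1 - 1 / p i else 1)
    (hB₂ : ∀ i j, B₂ i j = a i * a j) (s : K) :
    (s • B₂ - B₁).det =
      (1 - ∑ i, p i + s * ((∑ i, a i * p i) ^ 2 - (∑ i, p i - 1) * ∑ i, a i ^ 2 * p i)) /
        ∏ i, p i := by
  have hsplit : s • B₂ - B₁ =
      diagonal (fun i => (p i)⁻¹) + vecMulVec (s • a) a + vecMulVec (fun _ => -1) (fun _ => 1) := by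
    ext i j
    simp only [Matrix.sub_apply, Matrix.smul_apply, Matrix.add_apply, diagonal_apply,
      vecMulVec_apply, Pi.smul_apply, smul_eq_mul, hB₁, hB₂]
    split_ifs <;> ring
  rw [hsplit, det_diagonal_add_vecMulVec_add_vecMulVec _ _ _ _ _ fun i => inv_ne_zero (hp i)]
  simp only [Finset.prod_inv_distrib, Pi.smul_apply, smul_eq_mul, div_inv_eq_mul, mul_neg, mul_one,
    neg_mul, one_mul, Finset.sum_neg_distrib, sub_neg_eq_add]
  have hR : ∑ i, a i * (s * a i) * p i = s * ∑ i, a i ^ 2 * p i := by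
    rw [Finset.mul_sum]; exact Finset.sum_congr rfl fun i _ => by ring
  have hQ : ∑ i, s * a i * p i = s * ∑ i, a i * p i := by
    rw [Finset.mul_sum]; exact Finset.sum_congr rfl fun i _ => by ring
  rw [hR, hQ]
  ring

theorem det_rank_one_perturbation_general (n : ℕ) (p a : Fin n → ℝ)
    (hp : ∀ i, p i ≠ 0)
    (B₁ B₂ : Matrix (Fin n) (Fin n) ℝ)
    (hB₁ : ∀ i j, B₁ i j = if i = j then 1 - 1 / p i else 1)
    (hB₂ : ∀ i j, B₂ i j = a i * a j) :
    ∀ s : ℝ,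
      (s • B₂ - B₁).det =
        s * ((∑ i, a i * p i) ^ 2 - ((∑ j, p j) - 1) * ∑ i, (a i) ^ 2 * p i) /
            (∏ ℓ, p ℓ)
          + (-B₁).det := by
  intro s
  have hneg : -B₁ = (0 : ℝ) • B₂ - B₁ := by rw [zero_smul, zero_sub]
  have key := det_smul_sub_eq_div_prod p a hp B₁ B₂ hB₁ hB₂
  rw [hneg, key, key]
  ring

theorem det_rank_one_perturbation (n : ℕ) (hn : 2 ≤ n) (p a : Fin n → ℝ)
    (hp : ∀ i, p i ≠ 0)
    (B₁ B₂ : Matrix (Fin n) (Fin n) ℝ)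
    (hB₁ : ∀ i j, B₁ i j = if i = j then 1 - 1 / p i else 1)
    (hB₂ : ∀ i j, B₂ i j = a i * a j) :
    ∀ s : ℝ,
      (s • B₂ - B₁).det =
        s * ((∑ i, a i * p i) ^ 2 - ((∑ j, p j) - 1) * ∑ i, (a i) ^ 2 * p i) /
            (∏ ℓ, p ℓ)
          + (-B₁).det :=
  det_rank_one_perturbation_general n p a hp B₁ B₂ hB₁ hB₂
end

section
/- Let p_1,...,p_n > 0 with ∑ p_i = 1, let a_i = -ln p_i, let B₂ = aᵀa, and let 𝓑 = -B₁ where B₁ has off-diagonal entries 1 and diagonal entries 1 - 1/p_i. Then for s > 0, s · det(s⁻¹ B₂ + 𝓑) = H(p)² / ∏_ℓ p_ℓ, where H(p) = -∑ p_i ln p_i. Equivalently, √(s · det(s⁻¹B₂ + 𝓑)) = H(p)/√(∏ p_ℓ). -/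
/-!
`s⁻¹ B₂ + 𝓑 = diagonal p⁻¹ - 𝟙𝟙ᵀ + s⁻¹ aaᵀ` is a rank-two perturbation of an invertible
diagonal matrix. The matrix determinant lemma reduces its determinant to
`(∏ p)⁻¹` times a `2 × 2` determinant built from the moments `∑ p`, `∑ p a`, `∑ p a²`; since
`∑ p = 1` only the cross term `s⁻¹ (∑ p a)² = s⁻¹ H(p)²` survives.
-/

open Matrix

namespace Matrix

variable {K ι : Type*} [Field K] [DecidableEq ι]

lemma diagonal_inv_sub_add_smul_vecMulVec_eq (w a : ι → K) (c : K) :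
    diagonal w⁻¹ - vecMulVec 1 1 + c • vecMulVec a a =
      diagonal w⁻¹ + of (fun i k => ![1, a i] k) * of ![-1, c • a] := by
  ext i j
  simp [mul_apply, Fin.sum_univ_two, vecMulVec_apply]
  ring

variable [Fintype ι]

lemma inv_diagonal_inv {w : ι → K} (hw : ∀ i, w i ≠ 0) : (diagonal w⁻¹)⁻¹ = diagonal w := by
  refine inv_eq_left_inv ?_
  rw [diagonal_mul_diagonal, ← diagonal_one]
  exact congrArg diagonal (funext fun i => mul_inv_cancel₀ (hw i))

lemma one_add_mul_diagonal_mul_eq (w a : ι → K) (c : K) :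
    1 + of ![-1, c • a] * diagonal w * of (fun i k => ![1, a i] k) =
      !![1 - ∑ i, w i, -∑ i, w i * a i; c * ∑ i, w i * a i, 1 + c * ∑ i, w i * a i ^ 2] := by
  ext k l
  rw [add_apply, Matrix.mul_assoc, mul_apply]
  simp only [diagonal_mul]
  fin_cases k <;> fin_cases l <;>
    simp [Finset.mul_sum, sq, sub_eq_add_neg, mul_comm, mul_left_comm]

lemma det_diagonal_inv_sub_add_smul_vecMulVec {w : ι → K} (hw : ∀ i, w i ≠ 0) (a : ι → K)
    (c : K) :
    det (diagonal w⁻¹ - vecMulVec 1 1 + c • vecMulVec a a) =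
      (∏ i, w i)⁻¹ *
        ((1 - ∑ i, w i) * (1 + c * ∑ i, w i * a i ^ 2) + c * (∑ i, w i * a i) ^ 2) := by
  have hdet : IsUnit (diagonal w⁻¹).det := by
    simp [det_diagonal, Finset.prod_ne_zero_iff, hw]
  rw [diagonal_inv_sub_add_smul_vecMulVec_eq, det_add_mul _ _ hdet, inv_diagonal_inv hw,
    det_diagonal, one_add_mul_diagonal_mul_eq, det_fin_two_of]
  simp only [Pi.inv_apply, Finset.prod_inv_distrib]
  ring

end Matrix

lemma Real.neg_sum_mul_log_nonneg {ι : Type*} [Fintype ι] {p : ι → ℝ} (hp : ∀ i, 0 ≤ p i)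
    (hsum : ∑ i, p i = 1) : 0 ≤ -∑ i, p i * Real.log (p i) := by
  rw [← Finset.sum_neg_distrib]
  refine Finset.sum_nonneg fun i _ => ?_
  have hle : p i ≤ 1 := hsum ▸ Finset.single_le_sum (fun j _ => hp j) (Finset.mem_univ i)
  simpa [Real.negMulLog] using Real.negMulLog_nonneg (hp i) hle

theorem det_formula_entropy_general (n : ℕ) (p : Fin n → ℝ)
    (hp : ∀ i, 0 < p i) (hsum : ∑ i, p i = 1)
    (a : Fin n → ℝ) (ha : ∀ i, a i = -Real.log (p i))
    (B₂ 𝓑 : Matrix (Fin n) (Fin n) ℝ)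
    (hB₂ : ∀ i j, B₂ i j = a i * a j)
    (h𝓑 : ∀ i j, 𝓑 i j = if i = j then 1 / p i - 1 else -1)
    (s : ℝ) (hs : 0 < s) :
    s * (s⁻¹ • B₂ + 𝓑).det = (-∑ i, p i * Real.log (p i)) ^ 2 / ∏ ℓ, p ℓ ∧
    Real.sqrt (s * (s⁻¹ • B₂ + 𝓑).det) =
      (-∑ i, p i * Real.log (p i)) / Real.sqrt (∏ ℓ, p ℓ) := by
  have hM : s⁻¹ • B₂ + 𝓑 = diagonal p⁻¹ - vecMulVec 1 1 + s⁻¹ • vecMulVec a a := by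
    ext i j
    by_cases hij : i = j <;> simp [hB₂, h𝓑, vecMulVec_apply, hij] <;> ring
  have hH : -∑ i, p i * Real.log (p i) = ∑ i, p i * a i := by
    simp [ha, Finset.sum_neg_distrib]
  have hdet : s * (s⁻¹ • B₂ + 𝓑).det = (-∑ i, p i * Real.log (p i)) ^ 2 / ∏ ℓ, p ℓ := by
    rw [hM, det_diagonal_inv_sub_add_smul_vecMulVec (fun i => (hp i).ne'), hsum, hH]
    field_simp
    ring
  refine ⟨hdet, ?_⟩
  rw [hdet, Real.sqrt_div (sq_nonneg _),
    Real.sqrt_sq (Real.neg_sum_mul_log_nonneg (fun i => (hp i).le) hsum)]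

theorem det_formula_entropy (n : ℕ) (hn : 2 ≤ n) (p : Fin n → ℝ)
    (hp : ∀ i, 0 < p i) (hsum : ∑ i, p i = 1)
    (a : Fin n → ℝ) (ha : ∀ i, a i = -Real.log (p i))
    (B₂ 𝓑 : Matrix (Fin n) (Fin n) ℝ)
    (hB₂ : ∀ i j, B₂ i j = a i * a j)
    (h𝓑 : ∀ i j, 𝓑 i j = if i = j then 1 / p i - 1 else -1)
    (s : ℝ) (hs : 0 < s) :
    s * (s⁻¹ • B₂ + 𝓑).det = (-∑ i, p i * Real.log (p i)) ^ 2 / ∏ ℓ, p ℓ ∧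
    Real.sqrt (s * (s⁻¹ • B₂ + 𝓑).det) =
      (-∑ i, p i * Real.log (p i)) / Real.sqrt (∏ ℓ, p ℓ) :=
  det_formula_entropy_general n p hp hsum a ha B₂ 𝓑 hB₂ h𝓑 s hs
end

section
/- Let p be a probability vector with positive entries and suppose the probability vector q satisfies |q_i - p_i| ≥ ε for some index i, where 0 < ε. Then H(q)/H(q;p) < 1 - C(p)·ε² for some constant C(p) > 0 depending only on p, where H(q) = -∑ q_i ln q_i and H(q;p) = -∑ q_i ln p_i. -/
/-!
The gap `H(q;p) - H(q)` is the Kullback–Leibler divergence `∑ qᵢ log (qᵢ/pᵢ) - qᵢ + pᵢ`, and on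
`[0, 1]` each of its terms dominates `(qᵢ - pᵢ)² / 2`, because `x ↦ log x - x` is increasing there.
Hence the gap is at least `ε² / 2`. Since `H(q) ≥ 0` and `H(q;p) ≤ M := maxᵢ (-log pᵢ)`, this gives
`H(q) / H(q;p) < 1 - ε² / (4 M)`.
-/

open Real Finset

lemma monotoneOn_log_sub_self : MonotoneOn (fun s => log s - s) (Set.Ioc 0 1) := by
  rintro a ⟨ha, -⟩ b ⟨hb, hb1⟩ hab
  have hlog : log a - log b ≤ a / b - 1 := by
    rw [← log_div ha.ne' hb.ne']
    exact log_le_sub_one_of_pos (by positivity)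
  have hdiv : a / b - 1 ≤ a - b := by
    rw [div_sub_one hb.ne', div_le_iff₀ hb]
    nlinarith
  simp only
  linarith

lemma sq_sub_div_two_le_mul_log_sub {x y : ℝ} (hx0 : 0 ≤ x) (hx1 : x ≤ 1) (hy0 : 0 < y)
    (hy1 : y ≤ 1) : (x - y) ^ 2 / 2 ≤ x * log x - x * log y - x + y := by
  set g : ℝ → ℝ := fun s => s * log s - s * log y - s + y - (s - y) ^ 2 / 2
  have hg : Continuous g := by fun_prop
  have hg' : ∀ s ≠ 0, HasDerivAt g ((log s - s) - (log y - y)) s := fun s hs => by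
    have := ((((hasDerivAt_mul_log hs).sub ((hasDerivAt_id s).mul_const (log y))).sub
      (hasDerivAt_id s)).add_const y).sub ((((hasDerivAt_id s).sub_const y).pow 2).div_const 2)
    exact this.congr_deriv (by norm_num; ring)
  have hlog := monotoneOn_log_sub_self
  suffices 0 ≤ g x by simp only [g] at this; linarith
  have hgy : g y = 0 := by simp [g]
  rcases le_total x y with hxy | hyx
  · refine hgy ▸ antitoneOn_of_hasDerivWithinAt_nonpos (convex_Icc x y) hg.continuousOn
      (fun s hs => (hg' s ?_).hasDerivWithinAt) (fun s hs => ?_)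
      (Set.left_mem_Icc.2 hxy) (Set.right_mem_Icc.2 hxy) hxy
    all_goals rw [interior_Icc] at hs
    · exact (hx0.trans_lt hs.1).ne'
    · have hs0 := hx0.trans_lt hs.1
      linarith [hlog ⟨hs0, by linarith [hs.2]⟩ ⟨hy0, hy1⟩ hs.2.le]
  · refine hgy ▸ monotoneOn_of_hasDerivWithinAt_nonneg (convex_Icc y x) hg.continuousOn
      (fun s hs => (hg' s ?_).hasDerivWithinAt) (fun s hs => ?_)
      (Set.left_mem_Icc.2 hyx) (Set.right_mem_Icc.2 hyx) hyx
    all_goals rw [interior_Icc] at hs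
    · exact (hy0.trans hs.1).ne'
    · linarith [hlog ⟨hy0, hy1⟩ ⟨hy0.trans hs.1, by linarith [hs.2]⟩ hs.1.le]

section ProbabilityVector

variable {ι : Type*} [Fintype ι] {p q : ι → ℝ}

noncomputable def entropy (q : ι → ℝ) : ℝ := -∑ i, q i * log (q i)

noncomputable def crossEntropy (q p : ι → ℝ) : ℝ := -∑ i, q i * log (p i)

lemma le_one_of_sum_eq_one (hq : ∀ i, 0 ≤ q i) (hqs : ∑ i, q i = 1) (i : ι) : q i ≤ 1 :=
  hqs ▸ single_le_sum (fun k _ => hq k) (mem_univ i)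

lemma lt_one_of_sum_eq_one (hp : ∀ i, 0 < p i) (hps : ∑ i, p i = 1) {i j : ι} (hij : j ≠ i) :
    p i < 1 :=
  hps ▸ single_lt_sum hij (mem_univ i) (mem_univ j) (hp j) (fun k _ _ => (hp k).le)

lemma entropy_nonneg (hq : ∀ i, 0 ≤ q i) (hqs : ∑ i, q i = 1) : 0 ≤ entropy q :=
  neg_nonneg.2 <| sum_nonpos fun i _ =>
    mul_nonpos_of_nonneg_of_nonpos (hq i) (log_nonpos (hq i) (le_one_of_sum_eq_one hq hqs i))

lemma crossEntropy_le {M : ℝ} (hq : ∀ i, 0 ≤ q i) (hqs : ∑ i, q i = 1)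
    (hM : ∀ i, -log (p i) ≤ M) : crossEntropy q p ≤ M :=
  calc crossEntropy q p = ∑ i, q i * -log (p i) := by simp [crossEntropy, sum_neg_distrib]
    _ ≤ ∑ i, q i * M := sum_le_sum fun i _ => mul_le_mul_of_nonneg_left (hM i) (hq i)
    _ = M := by rw [← sum_mul, hqs, one_mul]

lemma sum_sq_sub_div_two_le_crossEntropy_sub_entropy (hp : ∀ i, 0 < p i) (hps : ∑ i, p i = 1)
    (hq : ∀ i, 0 ≤ q i) (hqs : ∑ i, q i = 1) :
    ∑ i, (q i - p i) ^ 2 / 2 ≤ crossEntropy q p - entropy q :=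
  calc ∑ i, (q i - p i) ^ 2 / 2
      ≤ ∑ i, (q i * log (q i) - q i * log (p i) - q i + p i) :=
        sum_le_sum fun i _ => sq_sub_div_two_le_mul_log_sub (hq i)
          (le_one_of_sum_eq_one hq hqs i) (hp i) (le_one_of_sum_eq_one (fun k => (hp k).le) hps i)
    _ = crossEntropy q p - entropy q := by
        simp only [sum_add_distrib, sum_sub_distrib, hqs, hps, crossEntropy, entropy]
        ring

end ProbabilityVector

lemma div_lt_one_sub_of_le_sub {H X M δ : ℝ} (hH : 0 ≤ H) (hXM : X ≤ M) (hδ : 0 < δ)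
    (hgap : δ ≤ X - H) : H / X < 1 - δ / (2 * M) := by
  have hX : 0 < X := by linarith
  have hM : 0 < M := hX.trans_le hXM
  have hscaled : δ * X / (2 * M) ≤ δ / 2 := by
    rw [div_le_div_iff₀ (by positivity) two_pos]
    nlinarith
  rw [div_lt_iff₀ hX, sub_mul, one_mul, div_mul_eq_mul_div]
  linarith

/-- If `q` deviates from `p` by at least `ε` in some coordinate, then the
ratio of entropy to cross-entropy is bounded away from 1 quadratically in `ε`. -/
theorem entropy_ratio_lt (n : ℕ) (hn : 2 ≤ n) (p : Fin n → ℝ)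
    (hp : ∀ i, 0 < p i) (hps : ∑ i, p i = 1) :
    ∃ C : ℝ, 0 < C ∧ ∀ ε : ℝ, 0 < ε → ∀ q : Fin n → ℝ,
      (∀ i, 0 ≤ q i) → ∑ i, q i = 1 → (∃ i, ε ≤ |q i - p i|) →
      (-∑ i, q i * Real.log (q i)) / (-∑ i, q i * Real.log (p i))
        < 1 - C * ε ^ 2 := by
  set M := ⨆ i, -log (p i)
  have hM : ∀ i, -log (p i) ≤ M := le_ciSup (Finite.bddAbove_range _)
  have hM0 : 0 < M := by
    have hp0 : p ⟨0, by omega⟩ < 1 :=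
      lt_one_of_sum_eq_one hp hps (j := ⟨1, by omega⟩) (by simp [Fin.ext_iff])
    exact (neg_pos.2 (log_neg (hp _) hp0)).trans_le (hM _)
  refine ⟨1 / (4 * M), by positivity, fun ε hε q hq hqs ⟨j, hj⟩ => ?_⟩
  have hgap : ε ^ 2 / 2 ≤ crossEntropy q p - entropy q :=
    calc ε ^ 2 / 2 ≤ (q j - p j) ^ 2 / 2 := by
          rw [← sq_abs (q j - p j)]
          gcongr
      _ ≤ ∑ i, (q i - p i) ^ 2 / 2 :=
          single_le_sum (f := fun i => (q i - p i) ^ 2 / 2) (fun i _ => by positivity) (mem_univ j)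
      _ ≤ _ := sum_sq_sub_div_two_le_crossEntropy_sub_entropy hp hps hq hqs
  show entropy q / crossEntropy q p < _
  convert div_lt_one_sub_of_le_sub (entropy_nonneg hq hqs) (crossEntropy_le hq hqs hM)
    (by positivity) hgap using 2
  ring
end

section
/- Extend the multinomial coefficient to nonnegative reals by M(x_1,...,x_n) = Γ(x_1+...+x_n+1)/∏_{i=1}^n Γ(x_i+1). If at least two of the coordinates x_j are positive (i.e., some x_j > 0 with j ≠ i), then M is strictly increasing in the variable x_i on [0,∞). -/
/-!
Write `S` for the sum of the coordinates other than `x i`. As a function of `t = x i`, the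
multinomial coefficient is `Γ(t + 1 + S) / Γ(t + 1)` times a positive constant. The ratio
`Γ(u + S) / Γ(u)` increases strictly in `u > 0` whenever `S > 0`, because `log Γ` is strictly
convex on `(0, ∞)`: it is the convex function `u ↦ log Γ(u + 1)` minus the strictly concave `log`.
-/

open Real Set

theorem StrictConvexOn.add_sub_lt_add_sub {s : Set ℝ} {f : ℝ → ℝ} (hf : StrictConvexOn ℝ s f)
    {x y h : ℝ} (hx : x ∈ s) (hyh : y + h ∈ s) (hxy : x < y) (hh : 0 < h) :
    f (x + h) - f x < f (y + h) - f y := by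
  have hxh : x < x + h := lt_add_of_pos_right x hh
  have hy : y < y + h := lt_add_of_pos_right y hh
  have hleft := hf.secant_strict_mono_aux2 hx hyh hxh (by linarith)
  have hright := hf.secant_strict_mono_aux3 hx hyh hxy hy
  rw [add_sub_cancel_left] at hleft hright
  exact (div_lt_div_iff_of_pos_right hh).mp (hleft.trans hright)

namespace Real

theorem strictConvexOn_log_Gamma : StrictConvexOn ℝ (Ioi 0) (log ∘ Gamma) := by
  have hshift : ConvexOn ℝ (Ioi 0) ((log ∘ Gamma) ∘ fun x => 1 + x) :=
    (convexOn_log_Gamma.translate_right 1).subset (fun x (hx : 0 < x) => by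
      change 0 < 1 + x; linarith) (convex_Ioi 0)
  refine (hshift.sub_strictConcaveOn strictConcaveOn_log_Ioi).congr fun x (hx : 0 < x) => ?_
  simp only [Pi.sub_apply, Function.comp_apply, add_comm 1 x, Gamma_add_one hx.ne',
    log_mul hx.ne' (Gamma_pos_of_pos hx).ne', add_sub_cancel_left]

theorem Gamma_add_div_Gamma_strictMonoOn {c : ℝ} (hc : 0 < c) :
    StrictMonoOn (fun x => Gamma (x + c) / Gamma x) (Ioi 0) := by
  intro a (ha : 0 < a) b (hb : 0 < b) hab
  have hratio_pos : ∀ x : ℝ, 0 < x → 0 < Gamma (x + c) / Gamma x := fun x hx =>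
    div_pos (Gamma_pos_of_pos (by linarith)) (Gamma_pos_of_pos hx)
  have hlog := strictConvexOn_log_Gamma.add_sub_lt_add_sub ha (show 0 < b + c by linarith) hab hc
  simp only [Function.comp_apply] at hlog
  rw [← log_div (Gamma_pos_of_pos (by linarith)).ne' (Gamma_pos_of_pos ha).ne',
    ← log_div (Gamma_pos_of_pos (by linarith)).ne' (Gamma_pos_of_pos hb).ne'] at hlog
  exact (log_lt_log_iff (hratio_pos a ha) (hratio_pos b hb)).mp hlog

end Real

/-- The continuous multinomial coefficient
`M x = Γ(∑ x i + 1) / ∏ Γ(x i + 1)` is strictly increasing in the `i`-th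
variable on `[0,∞)` provided some other coordinate is positive. -/
theorem multinomial_strictMono (n : ℕ) (x : Fin n → ℝ) (hx : ∀ i, 0 ≤ x i)
    (i : Fin n) (hj : ∃ j, j ≠ i ∧ 0 < x j) :
    StrictMonoOn
      (fun t : ℝ =>
        Real.Gamma ((∑ l, Function.update x i t l) + 1) /
          ∏ l, Real.Gamma (Function.update x i t l + 1))
      (Set.Ici 0) := by
  obtain ⟨j, hji, hxj⟩ := hj
  set S := ∑ l ∈ Finset.univ \ {i}, x l
  set C := ∏ l ∈ Finset.univ \ {i}, Gamma (x l + 1)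
  have hS : 0 < S := hxj.trans_le (Finset.single_le_sum (fun l _ => hx l) (by simp [hji]))
  have hC : 0 < C := Finset.prod_pos fun l _ => Gamma_pos_of_pos (by linarith [hx l])
  have hM : ∀ t : ℝ, Gamma ((∑ l, Function.update x i t l) + 1) /
      ∏ l, Gamma (Function.update x i t l + 1) = Gamma (t + 1 + S) / Gamma (t + 1) / C := by
    intro t
    rw [Finset.sum_update_of_mem (Finset.mem_univ i), add_right_comm, div_div,
      ← Finset.prod_update_of_mem (Finset.mem_univ i)]
    congr! 2 with l
    exact Function.apply_update (fun _ v => Gamma (v + 1)) x i t l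
  intro a (ha : 0 ≤ a) b (hb : 0 ≤ b) hab
  simp only [hM]
  exact div_lt_div_of_pos_right (Gamma_add_div_Gamma_strictMonoOn hS
    (show 0 < a + 1 by linarith) (show 0 < b + 1 by linarith) (by linarith)) hC
end

section
/- Let a_1,...,a_n > 0 satisfy ∑_{i=1}^n e^{-a_i} = 1, and define Q: ℝ → ℕ by Q(z) = ∑ over integer vectors k ∈ ℤ_{≥0}^n with ∑ a_i k_i ≤ z of the multinomial coefficient (k_1+...+k_n)!/(k_1!···k_n!) (so Q(z) = 0 for z < 0 and Q(0) = 1). Then there exist constants 0 < c₁ < c₂ such that c₁ e^z ≤ Q(z) ≤ c₂ e^z for all z ≥ 0. -/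
/-!
Splitting words according to their first letter gives the renewal equation
`Q z = 1 + ∑ i, Q (z - a i)` for `Q = wordCount n a` and `z ≥ 0`; on the multinomial side this is Pascal's rule.
With `c = 1 / (n - 1)` the function `Q + c` solves the homogeneous equation
`f z = ∑ i, f (z - a i)`, and so does `exp`, because `∑ i, exp (-a i) = 1`.
A comparison principle, proved by induction on `z` in steps of `min a i`, transfers
`c * exp z ≤ Q z + c ≤ c * exp (∑ i, a i) * exp z` from the strip `[-∑ i, a i, 0)`, where
`Q + c = c`, to all `z ≥ 0`. Together with `Q z ≥ 1` this gives both bounds.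
-/

/-- `wordCount n a z` is the number (with multinomial multiplicity) of lattice
points `k ∈ ℤ_{≥0}^n` with `∑ a i * k i ≤ z`; equivalently the number of words
of probability at least `e^{-z}`.  It is `0` for `z < 0`. -/
noncomputable def wordCount (n : ℕ) (a : Fin n → ℝ) (z : ℝ) : ℝ :=
  ∑' k : {k : Fin n → ℕ // ∑ i, a i * (k i : ℝ) ≤ z},
    (Nat.multinomial Finset.univ k.1 : ℝ)

open Finset

namespace Nat

variable {ι : Type*} [DecidableEq ι]

theorem sub_single_add_single {k : ι → ℕ} {i : ι} (hi : k i ≠ 0) :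
    k - Pi.single i 1 + Pi.single i 1 = k :=
  tsub_add_cancel_of_le fun j => by
    rcases eq_or_ne j i with rfl | hj
    · simpa [Nat.one_le_iff_ne_zero]
    · simp [Pi.single_eq_of_ne hj]

variable [Fintype ι]

theorem multinomial_univ_eq_choose_mul (k : ι → ℕ) (i : ι) :
    multinomial univ k = (∑ j, k j).choose (k i) * multinomial (univ.erase i) k := by
  rw [← add_sum_erase _ _ (mem_univ i), ← multinomial_insert (notMem_erase i univ),
    insert_erase (mem_univ i)]

theorem add_one_mul_multinomial (k : ι → ℕ) (i : ι) :
    (∑ j, k j + 1) * multinomial univ k =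
      multinomial univ (k + Pi.single i 1) * (k i + 1) := by
  have h_erase : multinomial (univ.erase i) (k + Pi.single i 1) = multinomial (univ.erase i) k :=
    multinomial_congr fun j hj => by simp [Pi.single_eq_of_ne (ne_of_mem_erase hj)]
  have h_sum : ∑ j, (k + Pi.single i 1 : ι → ℕ) j = ∑ j, k j + 1 := by
    simp [sum_add_distrib]
  rw [multinomial_univ_eq_choose_mul k i, multinomial_univ_eq_choose_mul _ i, h_erase, h_sum,
    ← mul_assoc, add_one_mul_choose_eq]
  simp only [Pi.add_apply, Pi.single_eq_same]
  ring

theorem multinomial_eq_sum_sub_single {k : ι → ℕ} (hk : k ≠ 0) :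
    multinomial univ k = ∑ i with k i ≠ 0, multinomial univ (k - Pi.single i 1) := by
  have h_pos : 0 < ∑ j, k j := by
    obtain ⟨i, hi⟩ := Function.ne_iff.mp hk
    exact (Nat.pos_of_ne_zero hi).trans_le (single_le_sum (fun _ _ => Nat.zero_le _) (mem_univ i))
  have h_term : ∀ i, k i ≠ 0 →
      (∑ j, k j) * multinomial univ (k - Pi.single i 1) = multinomial univ k * k i := by
    intro i hi
    have h := add_one_mul_multinomial (k - Pi.single i 1) i
    have h_sum : ∑ j, (k - Pi.single i 1 : ι → ℕ) j + 1 = ∑ j, k j := by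
      conv_rhs => rw [← sub_single_add_single hi]
      simp [sum_add_distrib]
    rwa [h_sum, sub_single_add_single hi, Pi.sub_apply, Pi.single_eq_same,
      Nat.sub_add_cancel (Nat.one_le_iff_ne_zero.mpr hi)] at h
  refine Nat.eq_of_mul_eq_mul_left h_pos ?_
  rw [mul_sum, sum_congr rfl fun i hi => h_term i (mem_filter.mp hi).2, ← mul_sum,
    sum_filter_ne_zero, mul_comm]

end Nat

section WordCost

variable {ι : Type*} [Fintype ι] (a : ι → ℝ)

def wordCost (k : ι → ℕ) : ℝ := ∑ i, a i * k i

variable {a}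

theorem wordCost_nonneg (ha : ∀ i, 0 ≤ a i) (k : ι → ℕ) : 0 ≤ wordCost a k :=
  sum_nonneg fun i _ => mul_nonneg (ha i) (Nat.cast_nonneg _)

theorem wordCost_add_single [DecidableEq ι] (k : ι → ℕ) (i : ι) :
    wordCost a (k + Pi.single i 1) = wordCost a k + a i := by
  simp [wordCost, mul_add, sum_add_distrib, Pi.single_apply]

theorem finite_setOf_wordCost_le (ha : ∀ i, 0 < a i) (z : ℝ) :
    {k | wordCost a k ≤ z}.Finite := by
  refine (Set.Finite.pi fun i => Set.finite_Iic ⌈z / a i⌉₊).subset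
    fun k hk i _ => (Nat.cast_le (α := ℝ)).mp ?_
  calc (k i : ℝ) ≤ z / a i := by
        rw [le_div_iff₀' (ha i)]
        exact (single_le_sum (f := fun j => a j * (k j : ℝ))
          (fun j _ => mul_nonneg (ha j).le (Nat.cast_nonneg _)) (mem_univ i)).trans hk
    _ ≤ ⌈z / a i⌉₊ := Nat.le_ceil _

end WordCost

section WordCount

variable {n : ℕ} {a : Fin n → ℝ}

theorem wordCount_nonneg (z : ℝ) : 0 ≤ wordCount n a z :=
  tsum_nonneg fun _ => Nat.cast_nonneg _

theorem wordCount_of_neg (ha : ∀ i, 0 ≤ a i) {z : ℝ} (hz : z < 0) : wordCount n a z = 0 := by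
  have : IsEmpty {k : Fin n → ℕ // ∑ i, a i * (k i : ℝ) ≤ z} :=
    ⟨fun k => (hz.trans_le (wordCost_nonneg ha k.1)).not_ge k.2⟩
  exact tsum_empty

theorem wordCount_eq_sum (ha : ∀ i, 0 < a i) (z : ℝ) :
    wordCount n a z =
      ∑ k ∈ (finite_setOf_wordCost_le ha z).toFinset, (Nat.multinomial univ k : ℝ) := by
  rw [← Finset.tsum_subtype', Set.Finite.coe_toFinset]
  rfl

theorem wordCount_sub_eq_sum_filter (ha : ∀ i, 0 < a i) (z : ℝ) (i : Fin n) :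
    wordCount n a (z - a i) =
      ∑ k ∈ (finite_setOf_wordCost_le ha z).toFinset with k i ≠ 0,
        (Nat.multinomial univ (k - Pi.single i 1) : ℝ) := by
  rw [wordCount_eq_sum ha]
  symm
  refine sum_nbij' (· - Pi.single i 1) (· + Pi.single i 1) ?_ ?_
    (fun k hk => Nat.sub_single_add_single (mem_filter.mp hk).2)
    (fun k _ => add_tsub_cancel_right k _) (fun _ _ => rfl)
  · intro k hk
    simp only [mem_filter, Set.Finite.mem_toFinset, Set.mem_ofPred_eq] at hk ⊢
    have h := wordCost_add_single (a := a) (k - Pi.single i 1) i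
    rw [Nat.sub_single_add_single hk.2] at h
    linarith [hk.1]
  · intro k hk
    simp only [mem_filter, Set.Finite.mem_toFinset, Set.mem_ofPred_eq] at hk ⊢
    refine ⟨?_, by simp⟩
    rw [wordCost_add_single]
    linarith

theorem wordCount_eq_one_add_sum (ha : ∀ i, 0 < a i) {z : ℝ} (hz : 0 ≤ z) :
    wordCount n a z = 1 + ∑ i, wordCount n a (z - a i) := by
  set F := (finite_setOf_wordCost_le ha z).toFinset
  have h_zero : (0 : Fin n → ℕ) ∈ F := by simpa [F, wordCost] using hz
  have h_pascal : ∀ k ∈ F.erase 0, (Nat.multinomial univ k : ℝ) =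
      ∑ i with k i ≠ 0, (Nat.multinomial univ (k - Pi.single i 1) : ℝ) := fun k hk => by
    exact_mod_cast Nat.multinomial_eq_sum_sub_single (ne_of_mem_erase hk)
  rw [wordCount_eq_sum ha, ← add_sum_erase F _ h_zero, sum_congr rfl h_pascal,
    sum_erase F (by simp)]
  have h_one : Nat.multinomial univ (0 : Fin n → ℕ) = 1 := by simp [Nat.multinomial]
  simp only [h_one, Nat.cast_one, sum_filter]
  rw [sum_comm]
  simp only [wordCount_sub_eq_sum_filter ha z, sum_filter, F]

theorem one_le_wordCount (ha : ∀ i, 0 < a i) {z : ℝ} (hz : 0 ≤ z) : 1 ≤ wordCount n a z := by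
  rw [wordCount_eq_one_add_sum ha hz]
  exact le_add_of_nonneg_right (sum_nonneg fun i _ => wordCount_nonneg _)

end WordCount

theorem one_lt_card_of_sum_exp_neg_eq_one {ι : Type*} [Fintype ι] {a : ι → ℝ}
    (ha : ∀ i, 0 < a i) (hsum : ∑ i, Real.exp (-a i) = 1) : 1 < (Fintype.card ι : ℝ) := by
  have h_ne : (univ : Finset ι).Nonempty := by
    by_contra h
    simp [not_nonempty_iff_eq_empty.mp h] at hsum
  calc (1 : ℝ) = ∑ i, Real.exp (-a i) := hsum.symm
    _ < ∑ _i : ι, 1 := sum_lt_sum_of_nonempty h_ne fun i _ => by simpa using ha i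
    _ = Fintype.card ι := by simp

theorem sum_mul_exp_sub {ι : Type*} [Fintype ι] {a : ι → ℝ} (hsum : ∑ i, Real.exp (-a i) = 1)
    (C z : ℝ) : ∑ i, C * Real.exp (z - a i) = C * Real.exp z := by
  simp_rw [sub_eq_add_neg, Real.exp_add, ← mul_assoc, ← mul_sum, hsum, mul_one]

theorem renewal_comparison {ι : Type*} [Fintype ι] {a : ι → ℝ}
    (ha : ∀ i, 0 < a i) {A : ℝ} (hA : ∀ i, a i ≤ A) {f g : ℝ → ℝ}
    (hf : ∀ z, 0 ≤ z → f z ≤ ∑ i, f (z - a i)) (hg : ∀ z, 0 ≤ z → ∑ i, g (z - a i) ≤ g z)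
    (h_base : ∀ z, -A ≤ z → z < 0 → f z ≤ g z) {z : ℝ} (hz : -A ≤ z) : f z ≤ g z := by
  obtain ⟨ε, hε, hεa⟩ : ∃ ε > 0, ∀ i, ε ≤ a i := by
    cases isEmpty_or_nonempty ι
    · exact ⟨1, one_pos, isEmptyElim⟩
    · obtain ⟨i₀, hi₀⟩ := Finite.exists_min a
      exact ⟨a i₀, ha i₀, hi₀⟩
  suffices ∀ m : ℕ, ∀ z, -A ≤ z → z < m * ε → f z ≤ g z by
    obtain ⟨m, hm⟩ := exists_nat_gt (z / ε)
    exact this m z hz ((div_lt_iff₀ hε).mp hm)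
  intro m
  induction m with
  | zero => exact fun z hzA hz => h_base z hzA (by simpa using hz)
  | succ m ih =>
    intro z hzA hz
    rcases lt_or_ge z 0 with hz0 | hz0
    · exact h_base z hzA hz0
    calc f z ≤ ∑ i, f (z - a i) := hf z hz0
      _ ≤ ∑ i, g (z - a i) := sum_le_sum fun i _ => ih _ (by linarith [hA i])
          (by push_cast at hz; linarith [hεa i])
      _ ≤ g z := hg z hz0

section Bounds

variable {n : ℕ} {a : Fin n → ℝ} {c : ℝ}

theorem wordCount_add_eq_sum (ha : ∀ i, 0 < a i) (hc : (n - 1 : ℝ) * c = 1) {z : ℝ}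
    (hz : 0 ≤ z) : wordCount n a z + c = ∑ i, (wordCount n a (z - a i) + c) := by
  rw [wordCount_eq_one_add_sum ha hz, sum_add_distrib, sum_const, card_univ, Fintype.card_fin,
    nsmul_eq_mul]
  linarith

theorem wordCount_add_le_mul_exp (ha : ∀ i, 0 < a i) (hsum : ∑ i, Real.exp (-a i) = 1)
    (hc : (n - 1 : ℝ) * c = 1) (hc_nonneg : 0 ≤ c) {z : ℝ} (hz : 0 ≤ z) :
    wordCount n a z + c ≤ c * Real.exp (∑ i, a i) * Real.exp z := by
  have hA : ∀ i, a i ≤ ∑ j, a j := fun i => single_le_sum (fun j _ => (ha j).le) (mem_univ i)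
  refine renewal_comparison ha hA (fun z hz => (wordCount_add_eq_sum ha hc hz).le)
    (g := fun z => c * Real.exp (∑ i, a i) * Real.exp z)
    (fun z _ => (sum_mul_exp_sub hsum _ z).le) (fun z hzA hz => ?_) ?_
  · rw [wordCount_of_neg (fun i => (ha i).le) hz, zero_add, mul_assoc, ← Real.exp_add]
    exact le_mul_of_one_le_right hc_nonneg (Real.one_le_exp (by linarith))
  · linarith [sum_nonneg fun i (_ : i ∈ univ) => (ha i).le]

theorem mul_exp_le_wordCount_add (ha : ∀ i, 0 < a i) (hsum : ∑ i, Real.exp (-a i) = 1)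
    (hc : (n - 1 : ℝ) * c = 1) (hc_nonneg : 0 ≤ c) {z : ℝ} (hz : 0 ≤ z) :
    c * Real.exp z ≤ wordCount n a z + c := by
  have hA : ∀ i, a i ≤ ∑ j, a j := fun i => single_le_sum (fun j _ => (ha j).le) (mem_univ i)
  refine renewal_comparison ha hA (f := fun z => c * Real.exp z)
    (g := fun z => wordCount n a z + c) (fun z _ => (sum_mul_exp_sub hsum c z).ge)
    (fun z hz => (wordCount_add_eq_sum ha hc hz).ge) (fun z _ hz => ?_) ?_
  · rw [wordCount_of_neg (fun i => (ha i).le) hz, zero_add]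
    exact mul_le_of_le_one_right hc_nonneg (Real.exp_le_one_iff.mpr hz.le)
  · linarith [sum_nonneg fun i (_ : i ∈ univ) => (ha i).le]

end Bounds

theorem wordCount_power_bounds_general (n : ℕ) (a : Fin n → ℝ)
    (ha : ∀ i, 0 < a i) (hsum : ∑ i, Real.exp (-a i) = 1) :
    ∃ c₁ c₂ : ℝ, 0 < c₁ ∧ c₁ < c₂ ∧ ∀ z : ℝ, 0 ≤ z →
      c₁ * Real.exp z ≤ wordCount n a z ∧ wordCount n a z ≤ c₂ * Real.exp z := by
  have h_card : (1 : ℝ) < n := by simpa using one_lt_card_of_sum_exp_neg_eq_one ha hsum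
  set c : ℝ := ((n : ℝ) - 1)⁻¹
  have hc : (n - 1 : ℝ) * c = 1 := mul_inv_cancel₀ (sub_pos.mpr h_card).ne'
  have hc_pos : 0 < c := inv_pos.mpr (sub_pos.mpr h_card)
  refine ⟨c / (1 + c), c * Real.exp (∑ i, a i), by positivity, ?_, fun z hz => ⟨?_, ?_⟩⟩
  · calc c / (1 + c) < c := div_lt_self hc_pos (by linarith)
      _ ≤ c * Real.exp (∑ i, a i) := le_mul_of_one_le_right hc_pos.le
          (Real.one_le_exp (sum_nonneg fun i _ => (ha i).le))
  · rw [div_mul_eq_mul_div, div_le_iff₀ (by positivity)]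
    nlinarith [mul_exp_le_wordCount_add ha hsum hc hc_pos.le hz, one_le_wordCount ha hz]
  · linarith [wordCount_add_le_mul_exp ha hsum hc hc_pos.le hz]

theorem wordCount_power_bounds (n : ℕ) (hn : 1 ≤ n) (a : Fin n → ℝ)
    (ha : ∀ i, 0 < a i) (hsum : ∑ i, Real.exp (-a i) = 1) :
    ∃ c₁ c₂ : ℝ, 0 < c₁ ∧ c₁ < c₂ ∧ ∀ z : ℝ, 0 ≤ z →
      c₁ * Real.exp z ≤ wordCount n a z ∧ wordCount n a z ≤ c₂ * Real.exp z :=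
  wordCount_power_bounds_general n a ha hsum
end

section
/- For an irrational θ, the sequence (nθ) mod 1 is well-distributed: for all 0 ≤ a < b ≤ 1, the proportion among {(k+1)θ},...,{(k+N)θ} of terms lying in [a,b) converges to b - a as N → ∞, uniformly in k ≥ 0. -/
/-!
By Dirichlet's theorem there are reduced fractions `p / q` with `q` arbitrarily large and
`|θ - p / q| < 1 / q ^ 2`. For `j < q` the point `x + jθ` lies within `1 / q` of `x + jp / q`,
and since `p` is a unit mod `q` these run once through a translate of `(1 / q)ℤ` mod 1. Hence
every block of `q` consecutive terms has `q (b - a) + O(1)` points in `[a, b)`, whatever its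
starting index, and cutting `1, …, N` into such blocks gives the error `O(N / q + q)`.
-/

open Finset

namespace ZMod

variable {q : ℕ} [NeZero q]

theorem sum_range_natCast {M : Type*} [AddCommMonoid M] (f : ZMod q → M) :
    ∑ i ∈ range q, f i = ∑ u, f u :=
  sum_nbij' (↑) val (fun _ _ => mem_univ _) (fun u _ => mem_range.2 u.val_lt)
    (fun _ hi => val_cast_of_lt (mem_range.1 hi)) (fun u _ => natCast_zmod_val u) (fun _ _ => rfl)

theorem fract_add_intCast_div (y : ℝ) (n : ℤ) :
    Int.fract (y + n / q) = Int.fract (y + (n : ZMod q).val / q) := by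
  have hq : (q : ℝ) ≠ 0 := Nat.cast_ne_zero.2 (NeZero.ne q)
  have hn : (n : ℝ) = (n : ZMod q).val + q * (n / q : ℤ) := by
    rw [← Int.cast_natCast, val_intCast]; exact_mod_cast (Int.emod_add_mul_ediv n q).symm
  rw [hn, add_div, mul_div_cancel_left₀ _ hq, ← add_assoc, Int.fract_add_intCast]

theorem card_filter_fract_add_affine_div (P : ℝ → Prop) [DecidablePred P] (y : ℝ) (s p : ℤ)
    (hp : IsUnit (p : ZMod q)) :
    #{j ∈ range q | P (Int.fract (y + (s + (j : ℕ) * p) / q))} =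
      #{i ∈ range q | P (Int.fract (y + ((i : ℕ) : ℝ) / q))} := by
  let G : ZMod q → ℕ := fun u => if P (Int.fract (y + u.val / q)) then 1 else 0
  simp only [card_filter]
  calc ∑ j ∈ range q, (if P (Int.fract (y + (s + (j : ℕ) * p) / q)) then 1 else 0)
      = ∑ j ∈ range q, G (s + (j : ZMod q) * p) := by
        refine sum_congr rfl fun j _ => ?_
        have := fract_add_intCast_div (q := q) y (s + j * p)
        push_cast at this
        simp only [G, this]
    _ = ∑ u, G (s + u * p) := sum_range_natCast fun u : ZMod q => G (s + u * p)
    _ = ∑ u, G u :=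
        Fintype.sum_equiv ((Units.mulRight hp.unit).trans (Equiv.addLeft (s : ZMod q))) _ _
          fun _ => rfl
    _ = ∑ i ∈ range q, G i := (sum_range_natCast G).symm
    _ = ∑ i ∈ range q, (if P (Int.fract (y + ((i : ℕ) : ℝ) / q)) then 1 else 0) :=
        sum_congr rfl fun i hi => by simp only [G, val_cast_of_lt (mem_range.1 hi)]

end ZMod

theorem card_filter_range_natCast_lt (q : ℕ) (c : ℝ) :
    #{i ∈ range q | ((i : ℕ) : ℝ) < c} = min q ⌈c⌉₊ := by
  rw [← card_range (min q ⌈c⌉₊)]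
  congr 1
  ext i
  simp only [mem_filter, mem_range, lt_min_iff, Nat.lt_ceil]

theorem card_filter_fract_add_div_lt {q : ℕ} (hq : 0 < q) (y L : ℝ) :
    #{i ∈ range q | Int.fract (y + ((i : ℕ) : ℝ) / q) < L} =
      min q ⌈q * L - Int.fract (q * y)⌉₊ := by
  have : NeZero q := ⟨hq.ne'⟩
  have hq' : (0 : ℝ) < q := Nat.cast_pos.2 hq
  set f := Int.fract (q * y)
  -- shifting the index by `⌊q y⌋` keeps the count and moves `y` to `f / q ∈ [0, 1 / q)`
  have hy : ∀ i : ℕ, y + i / q = f / q + ((⌊q * y⌋ : ℤ) + i * ((1 : ℤ) : ℝ)) / q := by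
    intro i
    have := Int.floor_add_fract (q * y)
    rw [← add_div, eq_div_iff hq'.ne', add_mul, div_mul_cancel₀ _ hq'.ne']
    push_cast
    linarith
  have hfract : ∀ i ∈ range q, Int.fract (f / q + (i : ℝ) / q) = (f + i) / q := fun i hi => by
    have hi : (i : ℝ) + 1 ≤ q := by exact_mod_cast mem_range.1 hi
    rw [← add_div, Int.fract_eq_self, div_lt_one hq']
    exact ⟨by positivity, by linarith [Int.fract_lt_one (q * y)]⟩
  simp_rw [hy]
  rw [ZMod.card_filter_fract_add_affine_div (· < L) _ _ 1 (by simp),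
    ← card_filter_range_natCast_lt]
  congr 1
  refine filter_congr fun i hi => ?_
  rw [hfract i hi, div_lt_iff₀ hq']
  constructor <;> intro h <;> linarith

theorem card_filter_fract_add_div_lt_le {q : ℕ} (hq : 0 < q) (y : ℝ) {L : ℝ} (hL : 0 ≤ L) :
    (#{i ∈ range q | Int.fract (y + ((i : ℕ) : ℝ) / q) < L} : ℝ) ≤ q * L + 1 := by
  rw [card_filter_fract_add_div_lt hq]
  have hf := Int.fract_nonneg ((q : ℝ) * y)
  calc ((min q ⌈q * L - Int.fract (q * y)⌉₊ : ℕ) : ℝ)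
        ≤ ⌈q * L - Int.fract (q * y)⌉₊ := by exact_mod_cast min_le_right _ _
    _ ≤ q * L + 1 := by
        rcases le_or_gt (q * L - Int.fract (q * y)) 0 with h | h
        · rw [Nat.ceil_eq_zero.2 h, Nat.cast_zero]; positivity
        · linarith [Nat.ceil_lt_add_one h.le]

theorem le_card_filter_fract_add_div_lt {q : ℕ} (hq : 0 < q) (y : ℝ) {L : ℝ} (hL : L ≤ 1) :
    q * L - 1 ≤ (#{i ∈ range q | Int.fract (y + ((i : ℕ) : ℝ) / q) < L} : ℝ) := by
  rw [card_filter_fract_add_div_lt hq, Nat.cast_min]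
  refine le_min ?_ ?_
  · nlinarith [(Nat.cast_pos (α := ℝ)).2 hq]
  · linarith [Nat.le_ceil ((q : ℝ) * L - Int.fract (q * y)), Int.fract_lt_one ((q : ℝ) * y)]

theorem Int.fract_lt_add_of_fract_lt {y z L t : ℝ} (hyz : y ≤ z) (ht : z - y ≤ t)
    (h : Int.fract y < L) : Int.fract z < L + t :=
  calc Int.fract z = Int.fract (y + (z - y)) := by rw [add_sub_cancel]
    _ ≤ Int.fract y + Int.fract (z - y) := Int.fract_add_le _ _
    _ ≤ Int.fract y + (z - y) := by
        have : (0 : ℝ) ≤ ⌊z - y⌋ := Int.cast_nonneg (Int.floor_nonneg.2 (sub_nonneg.2 hyz))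
        linarith [Int.self_sub_floor (z - y)]
    _ < L + t := by linarith

theorem Int.fract_mem_Ico_iff_fract_sub_lt {a b : ℝ} (ha : 0 ≤ a) (hb : b ≤ 1) (y : ℝ) :
    Int.fract y ∈ Set.Ico a b ↔ Int.fract (y - a) < b - a := by
  rw [Set.mem_Ico]
  rcases le_or_gt a (Int.fract y) with h | h
  · have hfract : Int.fract (y - a) = Int.fract y - a := Int.fract_eq_iff.2
      ⟨sub_nonneg.2 h, by linarith [Int.fract_lt_one y], ⌊y⌋,
        by rw [← Int.self_sub_floor]; ring⟩
    rw [hfract]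
    exact ⟨fun h' => sub_lt_sub_right h'.2 a, fun h' => ⟨h, by linarith⟩⟩
  · have hfloor : ⌊y - a⌋ < ⌊y⌋ := Int.floor_lt.2 (by linarith [Int.self_sub_floor y])
    have : (⌊y - a⌋ : ℝ) + 1 ≤ ⌊y⌋ := by exact_mod_cast hfloor
    have hwrap : b - a ≤ Int.fract (y - a) := by
      linarith [Int.self_sub_floor (y - a), Int.self_sub_floor y, Int.fract_nonneg y]
    exact ⟨fun h' => absurd h'.1 (not_le.2 h), fun h' => absurd h' (not_lt.2 hwrap)⟩

theorem abs_sum_range_sub_le_of_abs_sum_block_sub_le {f : ℕ → ℝ} {μ C : ℝ} {q : ℕ}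
    (hq : 0 < q) (hf : ∀ n, |f n - μ| ≤ 1)
    (hblock : ∀ k, |∑ j ∈ range q, f (k + j) - q * μ| ≤ C) (k N : ℕ) :
    |∑ m ∈ range N, f (k + m) - N * μ| ≤ C * N / q + q := by
  have hq' : (0 : ℝ) < q := Nat.cast_pos.2 hq
  have hC : 0 ≤ C := (abs_nonneg _).trans (hblock 0)
  induction N using Nat.strong_induction_on generalizing k with
  | _ N ih =>
  rcases lt_or_ge N q with hN | hN
  · have hN' : (N : ℝ) ≤ q := by exact_mod_cast hN.le
    calc |∑ m ∈ range N, f (k + m) - N * μ| = |∑ m ∈ range N, (f (k + m) - μ)| := by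
          rw [sum_sub_distrib, sum_const, card_range, nsmul_eq_mul]
      _ ≤ ∑ m ∈ range N, |f (k + m) - μ| := abs_sum_le_sum_abs _ _
      _ ≤ ∑ m ∈ range N, (1 : ℝ) := sum_le_sum fun m _ => hf _
      _ = N := by simp
      _ ≤ C * N / q + q := by linarith [show 0 ≤ C * N / q by positivity]
  · obtain ⟨M, rfl⟩ := Nat.exists_eq_add_of_le hN
    have hsplit : ∑ m ∈ range (q + M), f (k + m) - ((q + M : ℕ) : ℝ) * μ =
        (∑ j ∈ range q, f (k + j) - q * μ) + (∑ m ∈ range M, f (k + q + m) - M * μ) := by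
      simp only [sum_range_add, add_assoc]
      push_cast
      ring
    calc |∑ m ∈ range (q + M), f (k + m) - ((q + M : ℕ) : ℝ) * μ|
        ≤ C + (C * M / q + q) := by
          rw [hsplit]
          exact (abs_add_le _ _).trans (add_le_add (hblock k) (ih M (by omega) (k + q)))
      _ = C * ((q + M : ℕ) : ℝ) / q + q := by
          push_cast
          field_simp
          ring

theorem Rat.finite_setOf_den_le_abs_le (Q M : ℕ) :
    {r : ℚ | r.den ≤ Q ∧ |r| ≤ M}.Finite := by
  refine ((Icc (-(M * Q : ℤ)) (M * Q) ×ˢ Icc 0 Q).image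
    fun nd : ℤ × ℕ => (nd.1 : ℚ) / nd.2).finite_toSet.subset fun r ⟨hden, habs⟩ => ?_
  refine mem_coe.2 (mem_image.2 ⟨(r.num, r.den), ?_, Rat.num_div_den r⟩)
  have hnum : |(r.num : ℚ)| ≤ M * Q := by
    rw [← Rat.mul_den_eq_num, abs_mul, Nat.abs_cast]
    exact mul_le_mul habs (by exact_mod_cast hden) (Nat.cast_nonneg _) (Nat.cast_nonneg _)
  simp only [mem_product, mem_Icc, ← abs_le]
  exact ⟨by exact_mod_cast hnum, Nat.zero_le _, hden⟩

theorem Real.exists_rat_lt_den_abs_sub_lt_one_div_den_sq {ξ : ℝ} (hξ : Irrational ξ)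
    (Q : ℕ) :
    ∃ r : ℚ, Q < r.den ∧ |ξ - r| < 1 / (r.den : ℝ) ^ 2 := by
  obtain ⟨r, happrox, hr⟩ := ((infinite_rat_abs_sub_lt_one_div_den_sq_of_irrational hξ).sdiff
    (Rat.finite_setOf_den_le_abs_le Q (⌈|ξ|⌉₊ + 1))).nonempty
  refine ⟨r, ?_, happrox⟩
  by_contra hden
  refine hr ⟨not_lt.1 hden, ?_⟩
  have hden1 : 1 / (r.den : ℝ) ^ 2 ≤ 1 :=
    div_le_one_of_le₀ (one_le_pow₀ (by exact_mod_cast r.pos)) (by positivity)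
  have h := abs_sub_abs_le_abs_sub (r : ℝ) ξ
  rw [abs_sub_comm] at h
  have : |(r : ℝ)| ≤ ⌈|ξ|⌉₊ + 1 := by linarith [Nat.le_ceil |ξ|, happrox.out]
  exact_mod_cast this

theorem abs_card_filter_fract_add_mul_lt_sub_le {θ : ℝ} {q : ℕ} {p : ℤ} (hq : 0 < q)
    (hp : IsUnit (p : ZMod q)) (happrox : |θ - p / q| ≤ 1 / q ^ 2) (x : ℝ) {L : ℝ}
    (hL0 : 0 ≤ L) (hL1 : L ≤ 1) :
    |(#{j ∈ range q | Int.fract (x + (j : ℕ) * θ) < L} : ℝ) - q * L| ≤ 3 := by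
  have : NeZero q := ⟨hq.ne'⟩
  have hq' : (0 : ℝ) < q := Nat.cast_pos.2 hq
  have hclose : ∀ j ∈ range q, |j * θ - j * p / q| ≤ 1 / q := fun j hj => by
    have hj : (j : ℝ) ≤ q := by exact_mod_cast (mem_range.1 hj).le
    calc |j * θ - j * p / q| = j * |θ - p / q| := by
          rw [mul_div_assoc, ← mul_sub, abs_mul, Nat.abs_cast]
      _ ≤ q * (1 / q ^ 2) := mul_le_mul hj happrox (abs_nonneg _) hq'.le
      _ = 1 / q := by field_simp
  have hperm : ∀ (z L' : ℝ), #{j ∈ range q | Int.fract (z + (j : ℕ) * p / q) < L'} =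
      #{i ∈ range q | Int.fract (z + ((i : ℕ) : ℝ) / q) < L'} := fun z L' => by
    simpa using ZMod.card_filter_fract_add_affine_div (· < L') z 0 p hp
  have htwo : (2 : ℝ) / q = 1 / q + 1 / q := by ring
  have hupper : (#{j ∈ range q | Int.fract (x + (j : ℕ) * θ) < L} : ℝ) ≤ q * L + 3 :=
    calc (#{j ∈ range q | Int.fract (x + (j : ℕ) * θ) < L} : ℝ)
        ≤ #{j ∈ range q | Int.fract (x + 1 / q + (j : ℕ) * p / q) < L + 2 / q} := by
          refine Nat.cast_le.2 (card_le_card fun j hj => ?_)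
          rw [mem_filter] at hj ⊢
          have := abs_le.1 (hclose j hj.1)
          exact ⟨hj.1, Int.fract_lt_add_of_fract_lt (by linarith) (by linarith) hj.2⟩
      _ = #{i ∈ range q | Int.fract (x + 1 / q + ((i : ℕ) : ℝ) / q) < L + 2 / q} := by
          rw [hperm]
      _ ≤ q * (L + 2 / q) + 1 := card_filter_fract_add_div_lt_le hq _ (by positivity)
      _ = q * L + 3 := by field_simp; ring
  have hlower : q * L - 3 ≤ (#{j ∈ range q | Int.fract (x + (j : ℕ) * θ) < L} : ℝ) :=
    calc q * L - 3 = q * (L - 2 / q) - 1 := by field_simp; ring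
      _ ≤ #{i ∈ range q | Int.fract (x - 1 / q + ((i : ℕ) : ℝ) / q) < L - 2 / q} :=
          le_card_filter_fract_add_div_lt hq _ (by linarith [show (0 : ℝ) < 2 / q by positivity])
      _ = #{j ∈ range q | Int.fract (x - 1 / q + (j : ℕ) * p / q) < L - 2 / q} := by
          rw [hperm]
      _ ≤ #{j ∈ range q | Int.fract (x + (j : ℕ) * θ) < L} := by
          refine Nat.cast_le.2 (card_le_card fun j hj => ?_)
          rw [mem_filter] at hj ⊢
          have := abs_le.1 (hclose j hj.1)
          have h := Int.fract_lt_add_of_fract_lt (z := x + j * θ) (t := 2 / q)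
            (by linarith) (by linarith) hj.2
          exact ⟨hj.1, by rwa [sub_add_cancel] at h⟩
  rw [abs_le]
  constructor <;> linarith

theorem abs_card_filter_range_fract_mul_mem_Ico_sub_le {θ : ℝ} {q : ℕ} {p : ℤ} (hq : 0 < q)
    (hp : IsUnit (p : ZMod q)) (happrox : |θ - p / q| ≤ 1 / q ^ 2) {a b : ℝ} (ha : 0 ≤ a)
    (hab : a ≤ b) (hb : b ≤ 1) (k : ℕ) :
    |(#{j ∈ range q | Int.fract (((k + j : ℕ) : ℝ) * θ) ∈ Set.Ico a b} : ℝ) -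
      q * (b - a)| ≤ 3 := by
  have hshift : ∀ j : ℕ, ((k + j : ℕ) : ℝ) * θ - a = (k * θ - a) + j * θ := fun j => by
    push_cast; ring
  simp_rw [Int.fract_mem_Ico_iff_fract_sub_lt ha hb, hshift]
  exact abs_card_filter_fract_add_mul_lt_sub_le hq hp happrox _ (sub_nonneg.2 hab) (by linarith)

theorem abs_card_filter_Icc_fract_mul_mem_Ico_div_sub_le {θ : ℝ} {q : ℕ} {p : ℤ} (hq : 0 < q)
    (hp : IsUnit (p : ZMod q)) (happrox : |θ - p / q| ≤ 1 / q ^ 2) {a b : ℝ} (ha : 0 ≤ a)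
    (hab : a ≤ b) (hb : b ≤ 1) (k : ℕ) {N : ℕ} (hN : 0 < N) :
    |(#{m ∈ Icc 1 N | Int.fract (((k + m : ℕ) : ℝ) * θ) ∈ Set.Ico a b} : ℝ) / N - (b - a)| ≤
      3 / q + q / N := by
  let f : ℕ → ℝ := fun n => if Int.fract ((n : ℝ) * θ) ∈ Set.Ico a b then 1 else 0
  have hf : ∀ n, |f n - (b - a)| ≤ 1 := fun n => by
    simp only [f]
    split_ifs <;> rw [abs_le] <;> constructor <;> linarith
  have hblock : ∀ k, |∑ j ∈ range q, f (k + j) - q * (b - a)| ≤ 3 := fun k => by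
    rw [← natCast_card_filter]
    exact abs_card_filter_range_fract_mul_mem_Ico_sub_le hq hp happrox ha hab hb k
  have hcount : (#{m ∈ Icc 1 N | Int.fract (((k + m : ℕ) : ℝ) * θ) ∈ Set.Ico a b} : ℝ) =
      ∑ m ∈ range N, f (k + 1 + m) := by
    rw [natCast_card_filter, ← Ico_add_one_right_eq_Icc, sum_Ico_eq_sum_range]
    simp only [Nat.add_sub_cancel, f, add_assoc, add_comm 1]
  have hN' : (0 : ℝ) < N := Nat.cast_pos.2 hN
  rw [hcount, div_sub' hN'.ne', abs_div, abs_of_pos hN', div_le_iff₀ hN']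
  calc |∑ m ∈ range N, f (k + 1 + m) - N * (b - a)| ≤ 3 * N / q + q :=
        abs_sum_range_sub_le_of_abs_sum_block_sub_le hq hf hblock (k + 1) N
    _ = (3 / q + q / N) * N := by field_simp

/-- For irrational `θ`, the sequence `(nθ)` is well-distributed mod 1:
the proportion of `{(k+1)θ},…,{(k+N)θ}` lying in `[a,b)` converges to `b - a`,
uniformly in `k`. -/
theorem well_distributed_mod_one (θ : ℝ) (hθ : Irrational θ)
    (a b : ℝ) (ha : 0 ≤ a) (hab : a < b) (hb : b ≤ 1) :
    ∀ ε : ℝ, 0 < ε → ∃ N₀ : ℕ, ∀ N : ℕ, N₀ ≤ N → ∀ k : ℕ,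
      |(((Finset.Icc 1 N).filter
            (fun m => Int.fract (((k + m : ℕ) : ℝ) * θ) ∈ Set.Ico a b)).card : ℝ)
          / N - (b - a)| < ε := by
  intro ε hε
  obtain ⟨r, hden, happrox⟩ :=
    Real.exists_rat_lt_den_abs_sub_lt_one_div_den_sq hθ ⌈6 / ε⌉₊
  have hp : IsUnit ((r.num : ℤ) : ZMod r.den) :=
    (ZMod.coe_int_isUnit_iff_isCoprime _ _).2 (Int.isCoprime_iff_gcd_eq_one.2 r.reduced.symm)
  refine ⟨⌈2 * r.den / ε⌉₊ + 1, fun N hN k => ?_⟩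
  have hqε : 6 / ε < r.den := Nat.lt_of_ceil_lt hden
  have hNε : 2 * r.den / ε < N := Nat.lt_of_ceil_lt (by omega)
  have hq' : (0 : ℝ) < r.den := Nat.cast_pos.2 r.pos
  have hN' : (0 : ℝ) < N := lt_of_le_of_lt (by positivity) hNε
  rw [div_lt_iff₀ hε] at hqε hNε
  calc _ ≤ 3 / (r.den : ℝ) + r.den / N :=
        abs_card_filter_Icc_fract_mul_mem_Ico_div_sub_le r.pos hp
          (by rw [← Rat.cast_def]; exact happrox.le) ha hab.le hb k (by omega)
    _ < ε / 2 + ε / 2 :=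
        add_lt_add (by rw [div_lt_iff₀ hq']; linarith) (by rw [div_lt_iff₀ hN']; linarith)
    _ = ε := add_halves ε
end

section
/- Sum-versus-integral limit theorem: Let Ω₁ ⊂ Ω₂ ⊂ ... be Jordan measurable sets with union Ω, let f: Ω → ℝ be nonnegative, bounded and integrable on each Ω_i, with ∫_{Ω_i} f → ∞. Let K ⊂ Ω be countable with each K_i = K ∩ Ω_i finite. Suppose for every sufficiently small α > 0 there is a partition of Ω into Jordan measurable sets X_j (j = 1,2,...) such that each Ω_i = X_1 ∪ ... ∪ X_{n_i} for some n_i, sup_{X_j} f / inf_{X_j} f < 1 + α for all sufficiently large j, and |K ∩ X_j| / μ(X_j) → 1 as j → ∞. Then lim_{i→∞} (∫_{Ω_i} f) / (∑_{x ∈ K_i} f(x)) = 1. -/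
open MeasureTheory Filter Set Topology Function

/-!
On a piece `X` of the partition where `sup f ≤ a · inf f` and `#(K ∩ X)` is within a factor `b`
of `μ(X)`, both `∫_X f` and `∑_{K ∩ X} f` are squeezed between `μ(X) · inf f` and `μ(X) · sup f` up
to the factor `b`, so each is at most `a b` times the other. Summing over the pieces of `Ω i`,
the finitely many pieces where this fails contribute a bounded error, negligible against
`∫_{Ω i} f → ∞`. Since `a = 1 + α` and `b` can be taken arbitrarily close to `1`, the ratio
tends to `1`.
-/

theorem le_mul_mul_of_le_mul_of_mul_le {x y p q s S a b : ℝ} (hx : x ≤ p * S) (hy : q * s ≤ y)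
    (hSs : S ≤ a * s) (hpq : p ≤ b * q) (hp : 0 ≤ p) (hs : 0 ≤ s) (ha : 0 ≤ a) (hb : 0 ≤ b) :
    x ≤ a * b * y :=
  calc x ≤ p * (a * s) := hx.trans (by gcongr)
    _ ≤ b * q * (a * s) := by gcongr
    _ = a * b * (q * s) := by ring
    _ ≤ a * b * y := by gcongr

theorem Set.Finite.ncard_mul_le_finsum_mem {E : Type*} {T : Set E} {f : E → ℝ} {s : ℝ}
    (hT : T.Finite) (h : ∀ x ∈ T, s ≤ f x) : T.ncard * s ≤ ∑ᶠ x ∈ T, f x := by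
  rw [finsum_mem_eq_finite_toFinset_sum f hT, ncard_eq_toFinset_card T hT, ← nsmul_eq_mul]
  exact Finset.card_nsmul_le_sum _ _ _ fun x hx => h x (hT.mem_toFinset.1 hx)

theorem Set.Finite.finsum_mem_le_ncard_mul {E : Type*} {T : Set E} {f : E → ℝ} {S : ℝ}
    (hT : T.Finite) (h : ∀ x ∈ T, f x ≤ S) : ∑ᶠ x ∈ T, f x ≤ T.ncard * S := by
  rw [finsum_mem_eq_finite_toFinset_sum f hT, ncard_eq_toFinset_card T hT, ← nsmul_eq_mul]
  exact Finset.sum_le_card_nsmul _ _ _ fun x hx => h x (hT.mem_toFinset.1 hx)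

theorem exists_sum_range_le_add_mul {a b : ℕ → ℝ} {r : ℝ} (ha : ∀ j, 0 ≤ a j) (hb : ∀ j, 0 ≤ b j)
    (hr : 0 ≤ r) (hab : ∀ᶠ j in atTop, a j ≤ r * b j) :
    ∃ A, ∀ m, ∑ j ∈ Finset.range m, a j ≤ A + r * ∑ j ∈ Finset.range m, b j := by
  obtain ⟨J, hJ⟩ := eventually_atTop.1 hab
  refine ⟨∑ j ∈ Finset.range J, a j, fun m => ?_⟩
  rw [← Finset.sum_filter_add_sum_filter_not (Finset.range m) (· < J)]
  refine add_le_add (Finset.sum_le_sum_of_subset_of_nonneg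
    (fun j hj => Finset.mem_range.2 (Finset.mem_filter.1 hj).2) fun j _ _ => ha j) ?_
  rw [Finset.mul_sum]
  refine (Finset.sum_le_sum fun j hj => hJ j ?_).trans
    (Finset.sum_le_sum_of_subset_of_nonneg (Finset.filter_subset _ _)
      fun j _ _ => mul_nonneg hr (hb j))
  simpa using (Finset.mem_filter.1 hj).2

theorem eventually_le_mul_and_le_mul_of_tendsto_div {ι : Type*} {l : Filter ι} {c μ : ι → ℝ}
    (h : Tendsto (fun j => c j / μ j) l (𝓝 1)) (hμ : ∀ j, 0 ≤ μ j) {b : ℝ} (hb : 1 < b) :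
    ∀ᶠ j in l, c j ≤ b * μ j ∧ μ j ≤ b * c j := by
  have hb0 : 0 < b := one_pos.trans hb
  filter_upwards [h (Ioo_mem_nhds (inv_lt_one_of_one_lt₀ hb) hb)] with j ⟨hlo, hhi⟩
  have hμj : 0 < μ j := (hμ j).lt_of_ne fun h0 => by
    simp only [← h0, div_zero] at hlo; exact (inv_pos.2 hb0).not_gt hlo
  rw [lt_div_iff₀ hμj, inv_mul_lt_iff₀ hb0] at hlo
  rw [div_lt_iff₀ hμj] at hhi
  exact ⟨hhi.le, hlo.le⟩

theorem tendsto_div_of_le_add_mul {ι : Type*} {l : Filter ι} {u v : ι → ℝ}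
    (hu : Tendsto u l atTop)
    (h : ∀ r > 1, ∃ A, ∀ᶠ i in l, u i ≤ A + r * v i ∧ v i ≤ A + r * u i) :
    Tendsto (fun i => u i / v i) l (𝓝 1) := by
  rw [Metric.tendsto_nhds]
  intro ε hε
  obtain ⟨A, hA⟩ := h (1 + ε / 2) (by linarith)
  have hv : Tendsto v l atTop := by
    refine tendsto_atTop_mono' l (hA.mono fun i hi => ?_)
      ((tendsto_atTop_add_const_right l (-A) hu).atTop_div_const (by positivity : 0 < 1 + ε / 2))
    rw [div_le_iff₀ (by positivity)]
    linarith [hi.1]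
  filter_upwards [hA, hu.eventually_gt_atTop 0, hv.eventually_gt_atTop 0,
    (hu.const_mul_atTop (half_pos hε)).eventually_gt_atTop A,
    (hv.const_mul_atTop (half_pos hε)).eventually_gt_atTop A] with i ⟨huv, hvu⟩ hu0 hv0 hAu hAv
  rw [Real.dist_eq, abs_sub_lt_iff, sub_lt_iff_lt_add', sub_lt_comm, div_lt_iff₀ hv0,
    lt_div_iff₀ hv0]
  constructor <;> nlinarith

section Partition

variable {E : Type*} {f : E → ℝ} {K : Set E}

theorem exists_subset_of_forall_eq_biUnion_range {X Ω : ℕ → Set E}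
    (hdisj : Pairwise (Disjoint on X)) (hcover : ⋃ j, X j = ⋃ i, Ω i)
    (hΩX : ∀ i, ∃ m, Ω i = ⋃ j ∈ Finset.range m, X j) (j : ℕ) : ∃ i, X j ⊆ Ω i := by
  rcases (X j).eq_empty_or_nonempty with h | ⟨x, hx⟩
  · exact ⟨0, h ▸ empty_subset _⟩
  obtain ⟨i, hi⟩ := mem_iUnion.1 (hcover ▸ mem_iUnion_of_mem j hx)
  obtain ⟨m, hm⟩ := hΩX i
  rw [hm] at hi
  obtain ⟨k, hk, hxk⟩ := mem_iUnion₂.1 hi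
  obtain rfl : j = k := by_contra fun hjk => disjoint_left.1 (hdisj hjk) hx hxk
  exact ⟨i, hm ▸ subset_biUnion_of_mem hk⟩

theorem finsum_mem_inter_biUnion {X : ℕ → Set E} (hdisj : Pairwise (Disjoint on X))
    (hK : ∀ j, (K ∩ X j).Finite) (t : Finset ℕ) :
    ∑ᶠ x ∈ K ∩ ⋃ j ∈ t, X j, f x = ∑ j ∈ t, ∑ᶠ x ∈ K ∩ X j, f x := by
  rw [inter_iUnion₂, ← Finset.set_biUnion_coe,
    finsum_mem_biUnion (fun i _ j _ hij => (hdisj hij).mono inter_subset_right inter_subset_right)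
      t.finite_toSet fun j _ => hK j, finsum_mem_coe_finset]

variable [MeasurableSpace E] {μ : Measure E}

theorem setIntegral_le_mul_finsum_mem_and_finsum_mem_le_mul {X : Set E} {s S a b : ℝ}
    (hX : MeasurableSet X) (hμX : μ X ≠ ⊤) (hf : IntegrableOn f X μ) (hK : (K ∩ X).Finite)
    (hs : 0 ≤ s) (hsf : ∀ x ∈ X, s ≤ f x) (hfS : ∀ x ∈ X, f x ≤ S) (hSs : S ≤ a * s)
    (ha : 0 ≤ a) (hb : 0 ≤ b) (hKμ : ((K ∩ X).ncard : ℝ) ≤ b * μ.real X)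
    (hμK : μ.real X ≤ b * (K ∩ X).ncard) :
    ∫ x in X, f x ∂μ ≤ a * b * ∑ᶠ x ∈ K ∩ X, f x ∧
      ∑ᶠ x ∈ K ∩ X, f x ≤ a * b * ∫ x in X, f x ∂μ := by
  have hI_le : ∫ x in X, f x ∂μ ≤ μ.real X * S := by
    simpa [setIntegral_const] using setIntegral_mono_on hf (integrableOn_const hμX) hX hfS
  have hI_ge : s * μ.real X ≤ ∫ x in X, f x ∂μ := setIntegral_ge_of_const_le_real hX hμX hsf hf
  have hC_le := hK.finsum_mem_le_ncard_mul fun x hx => hfS x hx.2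
  have hC_ge := hK.ncard_mul_le_finsum_mem fun x hx => hsf x hx.2
  exact ⟨le_mul_mul_of_le_mul_of_mul_le hI_le hC_ge hSs hμK measureReal_nonneg hs ha hb,
    le_mul_mul_of_le_mul_of_mul_le hC_le (by rwa [mul_comm]) hSs hKμ (Nat.cast_nonneg _) hs ha hb⟩

theorem exists_le_add_mul_of_partition {Ω X : ℕ → Set E} {a b : ℝ}
    (hΩ : ∀ i, μ (Ω i) < ⊤) (hf0 : ∀ x ∈ ⋃ i, Ω i, 0 ≤ f x)
    (hint : ∀ i, IntegrableOn f (Ω i) μ) (hbdd : ∀ i, BddAbove (f '' Ω i))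
    (hKfin : ∀ i, (K ∩ Ω i).Finite) (hdisj : Pairwise (Disjoint on X))
    (hcover : ⋃ j, X j = ⋃ i, Ω i) (hX : ∀ j, MeasurableSet (X j))
    (hΩX : ∀ i, ∃ m, Ω i = ⋃ j ∈ Finset.range m, X j)
    (hosc : ∀ᶠ j in atTop, sSup (f '' X j) ≤ a * sInf (f '' X j))
    (hcount : Tendsto (fun j => ((K ∩ X j).ncard : ℝ) / μ.real (X j)) atTop (𝓝 1))
    (ha : 0 ≤ a) (hb : 1 < b) :
    ∃ A, ∀ i, ∫ x in Ω i, f x ∂μ ≤ A + a * b * ∑ᶠ x ∈ K ∩ Ω i, f x ∧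
      ∑ᶠ x ∈ K ∩ Ω i, f x ≤ A + a * b * ∫ x in Ω i, f x ∂μ := by
  have hXΩ := exists_subset_of_forall_eq_biUnion_range hdisj hcover hΩX
  have hf0X : ∀ j, ∀ x ∈ X j, 0 ≤ f x := fun j x hx => hf0 x (hcover ▸ mem_iUnion_of_mem j hx)
  have hintX : ∀ j, IntegrableOn f (X j) μ := fun j =>
    (hXΩ j).elim fun i hi => (hint i).mono_set hi
  have hKX : ∀ j, (K ∩ X j).Finite := fun j =>
    (hXΩ j).elim fun i hi => (hKfin i).subset (inter_subset_inter_right K hi)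
  have hcomp : ∀ᶠ j in atTop,
      ∫ x in X j, f x ∂μ ≤ a * b * ∑ᶠ x ∈ K ∩ X j, f x ∧
        ∑ᶠ x ∈ K ∩ X j, f x ≤ a * b * ∫ x in X j, f x ∂μ := by
    filter_upwards [hosc, eventually_le_mul_and_le_mul_of_tendsto_div hcount
      (fun _ => measureReal_nonneg) hb] with j hj ⟨hKμ, hμK⟩
    obtain ⟨i, hi⟩ := hXΩ j
    have hbddAbove : BddAbove (f '' X j) := (hbdd i).mono (image_mono hi)
    have hbddBelow : BddBelow (f '' X j) := ⟨0, forall_mem_image.2 (hf0X j)⟩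
    exact setIntegral_le_mul_finsum_mem_and_finsum_mem_le_mul (hX j)
      ((measure_mono hi).trans_lt (hΩ i)).ne (hintX j) (hKX j)
      (Real.sInf_nonneg (forall_mem_image.2 (hf0X j)))
      (fun x hx => csInf_le hbddBelow (mem_image_of_mem f hx))
      (fun x hx => le_csSup hbddAbove (mem_image_of_mem f hx)) hj ha (by linarith) hKμ hμK
  have hI0 : ∀ j, 0 ≤ ∫ x in X j, f x ∂μ := fun j => setIntegral_nonneg (hX j) (hf0X j)
  have hC0 : ∀ j, 0 ≤ ∑ᶠ x ∈ K ∩ X j, f x := fun j =>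
    finsum_nonneg fun x => finsum_nonneg fun hx => hf0X j x hx.2
  have hab : 0 ≤ a * b := by positivity
  obtain ⟨A, hA⟩ := exists_sum_range_le_add_mul hI0 hC0 hab (hcomp.mono fun _ => And.left)
  obtain ⟨B, hB⟩ := exists_sum_range_le_add_mul hC0 hI0 hab (hcomp.mono fun _ => And.right)
  refine ⟨max A B, fun i => ?_⟩
  obtain ⟨m, hm⟩ := hΩX i
  rw [hm, integral_biUnion_finset _ (fun j _ => hX j) (fun j _ k _ hjk => hdisj hjk)
    (fun j _ => hintX j), finsum_mem_inter_biUnion hdisj hKX]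
  exact ⟨(hA m).trans (by gcongr; exact le_max_left A B),
    (hB m).trans (by gcongr; exact le_max_right A B)⟩

end Partition

/-- Jordan measurability is rendered as measurability together with a null topological
frontier. -/
theorem integral_div_sum_tendsto_one_general (d : ℕ)
    (Ω : ℕ → Set (Fin d → ℝ)) (f : (Fin d → ℝ) → ℝ) (K : Set (Fin d → ℝ))
    (hΩmeas : ∀ i, MeasurableSet (Ω i) ∧ volume (frontier (Ω i)) = 0 ∧
      volume (Ω i) < ⊤)
    (hf0 : ∀ x ∈ ⋃ i, Ω i, 0 ≤ f x)
    (hint : ∀ i, IntegrableOn f (Ω i) volume)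
    (hbdd : ∀ i, BddAbove (f '' Ω i))
    (hdiv : Tendsto (fun i => ∫ x in Ω i, f x) atTop atTop)
    (hKfin : ∀ i, (K ∩ Ω i).Finite)
    (hpart : ∃ α₀ : ℝ, 0 < α₀ ∧ ∀ α : ℝ, 0 < α → α < α₀ →
      ∃ X : ℕ → Set (Fin d → ℝ),
        Pairwise (Function.onFun Disjoint X) ∧
        (⋃ j, X j) = ⋃ i, Ω i ∧
        (∀ j, MeasurableSet (X j) ∧ volume (frontier (X j)) = 0) ∧
        (∀ i, ∃ m : ℕ, Ω i = ⋃ j ∈ Finset.range m, X j) ∧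
        (∃ j₀ : ℕ, ∀ j, j₀ ≤ j →
          sSup (f '' X j) < (1 + α) * sInf (f '' X j)) ∧
        Tendsto (fun j => ((K ∩ X j).ncard : ℝ) / (volume (X j)).toReal)
          atTop (nhds 1)) :
    Tendsto
      (fun i => (∫ x in Ω i, f x) / ∑ x ∈ (hKfin i).toFinset, f x)
      atTop (nhds 1) := by
  obtain ⟨α₀, hα₀, hpart⟩ := hpart
  simp only [← finsum_mem_eq_finite_toFinset_sum]
  refine tendsto_div_of_le_add_mul hdiv fun r hr => ?_
  obtain ⟨α, hα, hαr⟩ := exists_between (lt_min hα₀ (sub_pos.2 hr))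
  obtain ⟨X, hdisj, hcover, hXmeas, hΩX, ⟨j₀, hosc⟩, hcount⟩ :=
    hpart α hα (hαr.trans_le (min_le_left _ _))
  have hb : 1 < r / (1 + α) :=
    (one_lt_div (by linarith)).2 (by linarith [min_le_right α₀ (r - 1)])
  obtain ⟨A, hA⟩ := exists_le_add_mul_of_partition (fun i => (hΩmeas i).2.2) hf0 hint hbdd
    hKfin hdisj hcover (fun j => (hXmeas j).1) hΩX
    (eventually_atTop.2 ⟨j₀, fun j hj => (hosc j hj).le⟩) hcount (by linarith) hb
  rw [mul_div_cancel₀ _ (by linarith)] at hA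
  exact ⟨A, Eventually.of_forall hA⟩

/-- Sum-versus-integral limit theorem.  Jordan measurability is rendered as
measurability together with a null topological frontier. -/
theorem integral_div_sum_tendsto_one (d : ℕ)
    (Ω : ℕ → Set (Fin d → ℝ)) (f : (Fin d → ℝ) → ℝ) (K : Set (Fin d → ℝ))
    (hΩmono : ∀ i, Ω i ⊆ Ω (i + 1))
    (hΩmeas : ∀ i, MeasurableSet (Ω i) ∧ volume (frontier (Ω i)) = 0 ∧
      volume (Ω i) < ⊤)
    (hf0 : ∀ x ∈ ⋃ i, Ω i, 0 ≤ f x)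
    (hint : ∀ i, IntegrableOn f (Ω i) volume)
    (hbdd : ∀ i, BddAbove (f '' Ω i))
    (hdiv : Tendsto (fun i => ∫ x in Ω i, f x) atTop atTop)
    (hKsub : K ⊆ ⋃ i, Ω i) (hKcount : K.Countable)
    (hKfin : ∀ i, (K ∩ Ω i).Finite)
    (hpart : ∃ α₀ : ℝ, 0 < α₀ ∧ ∀ α : ℝ, 0 < α → α < α₀ →
      ∃ X : ℕ → Set (Fin d → ℝ),
        Pairwise (Function.onFun Disjoint X) ∧
        (⋃ j, X j) = ⋃ i, Ω i ∧
        (∀ j, MeasurableSet (X j) ∧ volume (frontier (X j)) = 0) ∧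
        (∀ i, ∃ m : ℕ, Ω i = ⋃ j ∈ Finset.range m, X j) ∧
        (∃ j₀ : ℕ, ∀ j, j₀ ≤ j →
          sSup (f '' X j) < (1 + α) * sInf (f '' X j)) ∧
        Tendsto (fun j => ((K ∩ X j).ncard : ℝ) / (volume (X j)).toReal)
          atTop (nhds 1)) :
    Tendsto
      (fun i => (∫ x in Ω i, f x) / ∑ x ∈ (hKfin i).toFinset, f x)
      atTop (nhds 1) :=
  integral_div_sum_tendsto_one_general d Ω f K hΩmeas hf0 hint hbdd hdiv hKfin hpart
end
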